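/- arXiv:0805.1169 — 6 statements merged into one kernel-verified Lean document; each statement's English description precedes it below -/
import Mathlib

section
/- Let E be a finite-dimensional real inner product space and let C₁, C₂ ⊆ E be nonempty convex sets satisfying λ • v ∈ Cᵢ for every v ∈ Cᵢ and every real λ ≥ 0 (convex cones with common vertex 0). If C₁ and C₂ are not separated — i.e. there is no nonzero α ∈ E with ⟪α, v⟫ ≤ 0 for all v ∈ C₁ and ⟪α, w⟫ ≥ 0 for all w ∈ C₂ — then E = C₁ − C₂, that is, {v₁ − v₂ : v₁ ∈ C₁, v₂ ∈ C₂} = E. -/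
open Set
open scoped RealInnerProductSpace

/-- A convex set that is dense in a finite-dimensional normed real vector space is the whole
space. -/
lemma dense_convex_eq_univ {E : Type*} [NormedAddCommGroup E] [NormedSpace ℝ E]
    [FiniteDimensional ℝ E] {D : Set E} (hD : Convex ℝ D) (hcl : closure D = univ) :
    D = univ := by
  have hspan : affineSpan ℝ D = ⊤ := by
    have hclosed : IsClosed ((affineSpan ℝ D : Set E)) :=
      (affineSpan ℝ D).closed_of_finiteDimensional
    have : closure D ⊆ (affineSpan ℝ D : Set E) :=
      closure_minimal (subset_affineSpan ℝ D) hclosed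
    rw [hcl] at this
    exact SetLike.ext' (eq_univ_of_univ_subset this)
  obtain ⟨x₀, hx₀⟩ := (hD.interior_nonempty_iff_affineSpan_eq_top).2 hspan
  apply eq_univ_of_forall
  intro y
  have hy' : x₀ + (2:ℝ) • (y - x₀) ∈ closure D := by rw [hcl]; trivial
  have hmem : y ∈ openSegment ℝ x₀ (x₀ + (2:ℝ) • (y - x₀)) := by
    refine ⟨1/2, 1/2, by norm_num, by norm_num, by norm_num, ?_⟩
    simp only [smul_add, smul_smul]
    norm_num
    module
  exact interior_subset (hD.openSegment_interior_closure_subset_interior hx₀ hy' hmem)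

theorem not_separated_cones_span
    {E : Type*} [NormedAddCommGroup E] [InnerProductSpace ℝ E] [FiniteDimensional ℝ E]
    (C₁ C₂ : Set E) (hne₁ : C₁.Nonempty) (hne₂ : C₂.Nonempty)
    (hconv₁ : Convex ℝ C₁) (hconv₂ : Convex ℝ C₂)
    (hcone₁ : ∀ v ∈ C₁, ∀ l : ℝ, 0 ≤ l → l • v ∈ C₁)
    (hcone₂ : ∀ v ∈ C₂, ∀ l : ℝ, 0 ≤ l → l • v ∈ C₂)
    (hsep : ¬ ∃ α : E, α ≠ 0 ∧ (∀ v ∈ C₁, ⟪α, v⟫ ≤ 0) ∧ (∀ w ∈ C₂, 0 ≤ ⟪α, w⟫)) :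
    {x : E | ∃ v₁ ∈ C₁, ∃ v₂ ∈ C₂, x = v₁ - v₂} = univ := by
  by_contra hD
  apply hsep
  set D : Set E := {x : E | ∃ v₁ ∈ C₁, ∃ v₂ ∈ C₂, x = v₁ - v₂} with hDdef
  -- 0 ∈ C₁, 0 ∈ C₂
  obtain ⟨a, ha⟩ := hne₁
  obtain ⟨b, hb⟩ := hne₂
  have h0₁ : (0:E) ∈ C₁ := by simpa using hcone₁ a ha 0 le_rfl
  have h0₂ : (0:E) ∈ C₂ := by simpa using hcone₂ b hb 0 le_rfl
  have hDconv : Convex ℝ D := by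
    intro x hx y hy s t hs ht hst
    obtain ⟨v₁, hv₁, v₂, hv₂, rfl⟩ := hx
    obtain ⟨w₁, hw₁, w₂, hw₂, rfl⟩ := hy
    exact ⟨s • v₁ + t • w₁, hconv₁ hv₁ hw₁ hs ht hst,
      s • v₂ + t • w₂, hconv₂ hv₂ hw₂ hs ht hst, by module⟩
  have hDcone : ∀ x ∈ D, ∀ l : ℝ, 0 ≤ l → l • x ∈ D := by
    rintro x ⟨v₁, hv₁, v₂, hv₂, rfl⟩ l hl
    exact ⟨l • v₁, hcone₁ v₁ hv₁ l hl, l • v₂, hcone₂ v₂ hv₂ l hl, by module⟩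
  -- closure D is not everything
  have hclne : closure D ≠ univ := fun h => hD (dense_convex_eq_univ hDconv h)
  obtain ⟨x, hx⟩ : ∃ x, x ∉ closure D := by
    by_contra h
    push_neg at h
    exact hclne (eq_univ_of_forall h)
  obtain ⟨f, u, hfu, hux⟩ :=
    geometric_hahn_banach_closed_point (hDconv.closure) isClosed_closure hx
  -- f ≤ 0 on D
  have h0D : (0:E) ∈ D := ⟨0, h0₁, 0, h0₂, by simp⟩
  have hu0 : (0:ℝ) < u := by simpa using hfu 0 (subset_closure h0D)
  have hfle : ∀ d ∈ D, f d ≤ 0 := by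
    intro d hd
    by_contra h
    push_neg at h
    obtain ⟨l, hl⟩ := exists_nat_gt (u / f d)
    have hl0 : (0:ℝ) ≤ (l:ℝ) := Nat.cast_nonneg l
    have := hfu _ (subset_closure (hDcone d hd l hl0))
    rw [map_smul] at this
    have : u < (l:ℝ) * f d := by
      rw [div_lt_iff₀ h] at hl
      exact hl
    simp only [smul_eq_mul] at *
    linarith [hfu _ (subset_closure (hDcone d hd l hl0))]
  -- convert f to a vector
  set α : E := (InnerProductSpace.toDual ℝ E).symm f with hα
  have hαinner : ∀ y : E, ⟪α, y⟫ = f y := fun y => InnerProductSpace.toDual_symm_apply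
  have hαne : α ≠ 0 := by
    intro h
    have : f x = 0 := by rw [← hαinner, h, inner_zero_left]
    rw [this] at hux
    linarith
  refine ⟨α, hαne, ?_, ?_⟩
  · intro v hv
    rw [hαinner]
    simpa using hfle (v - 0) ⟨v, hv, 0, h0₂, rfl⟩
  · intro w hw
    rw [hαinner]
    have := hfle (0 - w) ⟨0, h0₁, w, hw, rfl⟩
    simp only [zero_sub, map_neg] at this
    linarith
end

section
/- Let E be a finite-dimensional real normed vector space, let X : ℝ × E → E and Φ : ℝ × E → E be of class C¹ jointly in both variables, let s ∈ ℝ, and suppose Φ(s, x) = x for all x ∈ E and that for every t ∈ ℝ and x ∈ E the map τ ↦ Φ(τ, x) has derivative X(t, Φ(t, x)) at τ = t (Φ is the evolution operator of the time-dependent vector field X with initial time s). Then for every t ∈ ℝ and all x, v ∈ E, the map τ ↦ (fderiv ℝ (fun y => Φ(τ, y)) x)(v) has derivative (fderiv ℝ (fun y => X(t, y)) (Φ(t, x)))((fderiv ℝ (fun y => Φ(t, y)) x)(v)) at τ = t. That is, the pair (Φ(t,x), D_xΦ(t,·)|_x v) is an integral curve of the complete (tangent) lift of X, so the evolution operator of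 the complete lift Xᵀ is the tangent map of the evolution operator of X. -/
/-!
Integrating the flow equation gives `Φ (t, x) = x + ∫ τ in s..t, X (τ, Φ (τ, x))`. Since `X` and `Φ`
are `C¹`, the integrand has a jointly continuous spatial derivative, so one may differentiate under
the integral sign: `D_xΦ(t) = id + ∫ τ in s..t, D_xX(τ, Φ(τ, x)) ∘ D_xΦ(τ)`. The integrand is
continuous in `τ`, so the fundamental theorem of calculus yields the variational equation.
-/

open intervalIntegral Metric

section VariationalEquation

variable {E F : Type*} [NormedAddCommGroup E] [NormedSpace ℝ E] [NormedAddCommGroup F]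
  [NormedSpace ℝ F]

section PartialDerivative

variable {f : ℝ × E → F}

theorem ContDiff.hasFDerivAt_partial_snd (hf : ContDiff ℝ 1 f) (t : ℝ) (z : E) :
    HasFDerivAt (fun y => f (t, y)) ((fderiv ℝ f (t, z)).comp (ContinuousLinearMap.inr ℝ ℝ E)) z :=
  (hf.differentiable one_ne_zero (t, z)).hasFDerivAt.comp z (hasFDerivAt_prodMk_right t z)

theorem ContDiff.hasFDerivAt_fderiv_partial_snd (hf : ContDiff ℝ 1 f) (t : ℝ) (z : E) :
    HasFDerivAt (fun y => f (t, y)) (fderiv ℝ (fun y => f (t, y)) z) z :=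
  (hf.hasFDerivAt_partial_snd t z).differentiableAt.hasFDerivAt

theorem ContDiff.continuous_fderiv_partial_snd (hf : ContDiff ℝ 1 f) :
    Continuous fun p : ℝ × E => fderiv ℝ (fun y => f (p.1, y)) p.2 := by
  simp_rw [fun p : ℝ × E => (hf.hasFDerivAt_partial_snd p.1 p.2).fderiv]
  exact (hf.continuous_fderiv one_ne_zero).clm_comp continuous_const

end PartialDerivative

theorem hasFDerivAt_intervalIntegral_of_continuous_partial [ProperSpace E] [CompleteSpace F]
    {G : ℝ × E → F} {G' : ℝ × E → E →L[ℝ] F} (hG : Continuous G) (hG' : Continuous G')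
    (hGG' : ∀ τ z, HasFDerivAt (fun y => G (τ, y)) (G' (τ, z)) z) (a b : ℝ) (x : E) :
    HasFDerivAt (fun z => ∫ τ in a..b, G (τ, z)) (∫ τ in a..b, G' (τ, x)) x := by
  have hG_slice : ∀ z, Continuous fun τ => G (τ, z) := fun z => hG.comp (.prodMk_left z)
  obtain ⟨M, hM⟩ : ∃ M, ∀ p ∈ Set.uIcc a b ×ˢ closedBall x 1, ‖G' p‖ ≤ M :=
    (isCompact_uIcc.prod (isCompact_closedBall x 1)).exists_bound_of_continuousOn hG'.continuousOn
  refine hasFDerivAt_integral_of_dominated_of_fderiv_le (F' := fun z τ => G' (τ, z))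
    (bound := fun _ => M) (ball_mem_nhds x one_pos) ?_ ((hG_slice x).intervalIntegrable a b)
    (hG'.comp (.prodMk_left x)).aestronglyMeasurable.restrict ?_ intervalIntegrable_const ?_
  · exact .of_forall fun z => (hG_slice z).aestronglyMeasurable.restrict
  · filter_upwards with τ hτ z hz
    exact hM (τ, z) ⟨Set.uIoc_subset_uIcc hτ, ball_subset_closedBall hz⟩
  · filter_upwards with τ _ z _ using hGG' τ z

theorem continuous_fderiv_partial_snd_comp {H : Type*} [NormedAddCommGroup H] [NormedSpace ℝ H]
    {X : ℝ × F → H} {Φ : ℝ × E → F} (hX : ContDiff ℝ 1 X) (hΦ : ContDiff ℝ 1 Φ) :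
    Continuous fun p : ℝ × E =>
      (fderiv ℝ (fun y => X (p.1, y)) (Φ p)).comp (fderiv ℝ (fun y => Φ (p.1, y)) p.2) :=
  (hX.continuous_fderiv_partial_snd.comp (continuous_fst.prodMk hΦ.continuous)).clm_comp
    hΦ.continuous_fderiv_partial_snd

theorem fderiv_flow_eq_id_add_intervalIntegral [ProperSpace E] {X Φ : ℝ × E → E}
    (hX : ContDiff ℝ 1 X) (hΦ : ContDiff ℝ 1 Φ) {s : ℝ} (hs : ∀ x, Φ (s, x) = x)
    (hflow : ∀ t x, HasDerivAt (fun τ => Φ (τ, x)) (X (t, Φ (t, x))) t) (t : ℝ) (x : E) :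
    fderiv ℝ (fun y => Φ (t, y)) x = ContinuousLinearMap.id ℝ E + ∫ τ in s..t,
      (fderiv ℝ (fun y => X (τ, y)) (Φ (τ, x))).comp (fderiv ℝ (fun y => Φ (τ, y)) x) := by
  have hXΦ : Continuous fun p : ℝ × E => X (p.1, Φ p) :=
    hX.continuous.comp (continuous_fst.prodMk hΦ.continuous)
  have hintegral_eq : (fun y => Φ (t, y)) = fun y => y + ∫ τ in s..t, X (τ, Φ (τ, y)) := by
    funext y
    rw [integral_eq_sub_of_hasDerivAt (fun τ _ => hflow τ y)
      ((hXΦ.comp (.prodMk_left y)).intervalIntegrable s t), hs]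
    abel
  have hchain : ∀ τ z, HasFDerivAt (fun y => X (τ, Φ (τ, y)))
      ((fderiv ℝ (fun y => X (τ, y)) (Φ (τ, z))).comp (fderiv ℝ (fun y => Φ (τ, y)) z)) z :=
    fun τ z =>
      (hX.hasFDerivAt_fderiv_partial_snd τ _).comp z (hΦ.hasFDerivAt_fderiv_partial_snd τ z)
  rw [hintegral_eq]
  exact ((hasFDerivAt_id x).add (hasFDerivAt_intervalIntegral_of_continuous_partial hXΦ
    (continuous_fderiv_partial_snd_comp hX hΦ) hchain s t x)).fderiv

end VariationalEquation

theorem evolution_operator_of_complete_lift_is_tangent_map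
    {E : Type*} [NormedAddCommGroup E] [NormedSpace ℝ E] [FiniteDimensional ℝ E]
    (X Φ : ℝ × E → E)
    (hX : ContDiff ℝ 1 X) (hΦ : ContDiff ℝ 1 Φ)
    (s : ℝ) (hs : ∀ x : E, Φ (s, x) = x)
    (hflow : ∀ (t : ℝ) (x : E), HasDerivAt (fun τ : ℝ => Φ (τ, x)) (X (t, Φ (t, x))) t) :
    ∀ (t : ℝ) (x v : E),
      HasDerivAt (fun τ : ℝ => fderiv ℝ (fun y => Φ (τ, y)) x v)
        (fderiv ℝ (fun y => X (t, y)) (Φ (t, x)) (fderiv ℝ (fun y => Φ (t, y)) x v)) t := by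
  intro t x v
  have : ProperSpace E := FiniteDimensional.proper_real E
  set C : ℝ → E →L[ℝ] E := fun τ =>
    (fderiv ℝ (fun y => X (τ, y)) (Φ (τ, x))).comp (fderiv ℝ (fun y => Φ (τ, y)) x)
  have hC : Continuous C := (continuous_fderiv_partial_snd_comp hX hΦ).comp (.prodMk_left x)
  have hCv : Continuous fun τ => C τ v := hC.clm_apply continuous_const
  have hvariation :
      (fun τ => fderiv ℝ (fun y => Φ (τ, y)) x v) = fun τ => v + ∫ σ in s..τ, C σ v := by
    funext τ
    rw [fderiv_flow_eq_id_add_intervalIntegral hX hΦ hs hflow τ x, add_apply,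
      ContinuousLinearMap.id_apply]
    exact congrArg (v + ·)
      (ContinuousLinearMap.intervalIntegral_apply (hC.intervalIntegrable s τ) v)
  rw [hvariation]
  exact (integral_hasDerivAt_right (hCv.intervalIntegrable s t)
    (hCv.stronglyMeasurableAtFilter _ _) hCv.continuousAt).const_add v
end

section
/- Let E be a finite-dimensional real normed vector space, let X, Y, Z : ℝ × E → E, let s ∈ ℝ and x₀ ∈ E. Suppose Φ : ℝ × E → E is of class C¹ jointly in both variables, Φ(s, y) = y for all y, and for every t ∈ ℝ and x ∈ E the map τ ↦ Φ(τ, x) has derivative X(t, Φ(t, x)) at τ = t. Suppose further that Z is the pullback of Y by the flow of X, i.e. for all t ∈ ℝ and x ∈ E, (fderiv ℝ (fun y => Φ(t, y)) x)(Z(t, x)) = Y(t, Φ(t, x)). Let ψ : ℝ → E be a function with ψ(s) = x₀ that is differentiable with derivative Z(t, ψ(t)) at every t ∈ ℝ. Then the curve c(t) := Φ(t, ψ(t)) satisfies c(s) = x₀ and is differentiable with derivative X(t, c(t)) + Y(t, c(t)) at every t ∈ ℝ; that is, the flow of X + Y from initial time s is the composition Φ^{X+Y}_{(t,s)} = Φ^X_{(t,s)}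 ∘ Φ^Z_{(t,s)} with Z = (Φ^X_{(t,s)})*Y. -/
/-! Differentiate `τ ↦ Φ (τ, ψ τ)` by the chain rule: its derivative is the sum of the time
derivative of `Φ`, which is `X` since `Φ` is the flow of `X`, and the space derivative of `Φ`
applied to `ψ' = Z`, which is `Y` by the defining property of the pullback. -/

open ContinuousLinearMap

section PartialDerivatives

variable {𝕜 E F : Type*} [NontriviallyNormedField 𝕜]
  [NormedAddCommGroup E] [NormedSpace 𝕜 E] [NormedAddCommGroup F] [NormedSpace 𝕜 F]
  {Φ : 𝕜 × E → F} {f : 𝕜 × E →L[𝕜] F} {t : 𝕜}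

theorem HasFDerivAt.hasDerivAt_comp_prodMk {ψ : 𝕜 → E} {v : E}
    (hΦ : HasFDerivAt Φ f (t, ψ t)) (hψ : HasDerivAt ψ v t) :
    HasDerivAt (fun τ => Φ (τ, ψ τ)) (f (1, 0) + f (0, v)) t := by
  have hsplit : ((1 : 𝕜), v) = ((1 : 𝕜), (0 : E)) + ((0 : 𝕜), v) := by simp
  have hcomp := hΦ.comp_hasDerivAt t ((hasDerivAt_id t).prodMk hψ)
  rw [hsplit, map_add] at hcomp
  exact hcomp

theorem HasFDerivAt.hasDerivAt_comp_prodMk_const {x : E} (hΦ : HasFDerivAt Φ f (t, x)) :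
    HasDerivAt (fun τ => Φ (τ, x)) (f (1, 0)) t := by
  simpa only [Prod.mk_zero_zero, map_zero, add_zero] using
    hΦ.hasDerivAt_comp_prodMk (ψ := fun _ => x) (hasDerivAt_const t x)

theorem HasFDerivAt.fderiv_comp_prodMk_apply {x : E} (hΦ : HasFDerivAt Φ f (t, x)) (v : E) :
    fderiv 𝕜 (fun y => Φ (t, y)) x v = f (0, v) := by
  have hpartial : HasFDerivAt (fun y => Φ (t, y)) (f.comp (inr 𝕜 𝕜 E)) x :=
    hΦ.comp x (hasFDerivAt_prodMk_right t x)
  rw [hpartial.fderiv]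
  rfl

end PartialDerivatives

theorem flow_of_sum_is_composition_general
    {E : Type*} [NormedAddCommGroup E] [NormedSpace ℝ E]
    (X Y Z : ℝ × E → E) (s : ℝ) (x₀ : E)
    (Φ : ℝ × E → E) (hΦ : ContDiff ℝ 1 Φ)
    (hs : ∀ y : E, Φ (s, y) = y)
    (hflow : ∀ (t : ℝ) (x : E), HasDerivAt (fun τ : ℝ => Φ (τ, x)) (X (t, Φ (t, x))) t)
    (hZ : ∀ (t : ℝ) (x : E), fderiv ℝ (fun y => Φ (t, y)) x (Z (t, x)) = Y (t, Φ (t, x)))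
    (ψ : ℝ → E) (hψ₀ : ψ s = x₀)
    (hψ : ∀ t : ℝ, HasDerivAt ψ (Z (t, ψ t)) t) :
    Φ (s, ψ s) = x₀ ∧
      ∀ t : ℝ, HasDerivAt (fun τ : ℝ => Φ (τ, ψ τ))
        (X (t, Φ (t, ψ t)) + Y (t, Φ (t, ψ t))) t := by
  refine ⟨by rw [hs, hψ₀], fun t => ?_⟩
  have hdΦ := (hΦ.differentiable one_ne_zero (t, ψ t)).hasFDerivAt
  have hX := hdΦ.hasDerivAt_comp_prodMk_const.unique (hflow t (ψ t))
  have hY := (hdΦ.fderiv_comp_prodMk_apply (Z (t, ψ t))).symm.trans (hZ t (ψ t))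
  simpa only [hX, hY] using hdΦ.hasDerivAt_comp_prodMk (hψ t)

theorem flow_of_sum_is_composition
    {E : Type*} [NormedAddCommGroup E] [NormedSpace ℝ E] [FiniteDimensional ℝ E]
    (X Y Z : ℝ × E → E) (s : ℝ) (x₀ : E)
    (Φ : ℝ × E → E) (hΦ : ContDiff ℝ 1 Φ)
    (hs : ∀ y : E, Φ (s, y) = y)
    (hflow : ∀ (t : ℝ) (x : E), HasDerivAt (fun τ : ℝ => Φ (τ, x)) (X (t, Φ (t, x))) t)
    (hZ : ∀ (t : ℝ) (x : E), fderiv ℝ (fun y => Φ (t, y)) x (Z (t, x)) = Y (t, Φ (t, x)))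
    (ψ : ℝ → E) (hψ₀ : ψ s = x₀)
    (hψ : ∀ t : ℝ, HasDerivAt ψ (Z (t, ψ t)) t) :
    Φ (s, ψ s) = x₀ ∧
      ∀ t : ℝ, HasDerivAt (fun τ : ℝ => Φ (τ, ψ τ))
        (X (t, Φ (t, ψ t)) + Y (t, Φ (t, ψ t))) t :=
  flow_of_sum_is_composition_general X Y Z s x₀ Φ hΦ hs hflow hZ ψ hψ₀ hψ
end

section
/- Let m, k ∈ ℕ, let X : ℝᵐ × ℝᵏ → ℝᵐ be continuous, let a < b, let u : ℝ → ℝᵏ, and let γ : ℝ → ℝᵐ be continuous with r ↦ X(γ(r), u(r)) integrable on [a,b] and γ(t) = γ(a) + ∫_a^t X(γ(r), u(r)) dr for all t ∈ [a,b]. Let t₁ ∈ (a,b), l₁ > 0 and u₁ ∈ ℝᵏ, and assume t₁ is a Lebesgue time for X∘(γ,u), i.e. (1/h)·∫_{t₁−h}^{t₁} X(γ(r), u(r)) dr → X(γ(t₁), u(t₁)) as h → 0⁺. Let ε > 0 with t₁ − l₁ε > a, and for each s ∈ (0, ε] let γₛ : ℝ → ℝᵐ be continuous with r ↦ X(γₛ(r),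 u[π₁ˢ](r)) integrable on [a,t₁] and γₛ(t) = γ(a) + ∫_a^t X(γₛ(r), u[π₁ˢ](r)) dr for all t ∈ [a,t₁], where u[π₁ˢ](r) = u₁ for r ∈ [t₁ − l₁s, t₁] and u[π₁ˢ](r) = u(r) otherwise. Assume moreover that γₛ(t) = γ(t) for all t ∈ [a, t₁ − l₁s] and that sup_{t ∈ [a,t₁]} ‖γₛ(t) − γ(t)‖ → 0 as s → 0⁺. Then (γₛ(t₁) − γ(t₁))/s → l₁ · (X(γ(t₁), u₁) − X(γ(t₁), u(t₁))) as s → 0⁺; i.e. the curve s ↦ γₛ(t₁) has at s = 0 the elementary perturbation vector v[π₁] = (X(γ(t₁), u₁) − X(γ(t₁), u(t₁))) · l₁ as one-sided tangent vector. -/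
/-!
Before the needle the perturbed and nominal trajectories coincide, so `γₛ(t₁) - γ(t₁)` is the
difference of the integrals of `X(γₛ, u₁)` and `X(γ, u)` over the needle window
`[t₁ - l₁ s, t₁]`. Divided by the window length `l₁ s`, the second is the Lebesgue-time average,
which tends to `X(γ(t₁), u(t₁))`; the first tends to `X(γ(t₁), u₁)` because uniform convergence
`γₛ → γ` and continuity of `γ` at `t₁` make `γₛ` uniformly close to `γ(t₁)` on the shrinking
window.
-/

open MeasureTheory Set Filter Topology

theorem norm_inv_smul_integral_sub_le {E : Type*} [NormedAddCommGroup E] [NormedSpace ℝ E]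
    [CompleteSpace E] {f : ℝ → E} {c : E} {x y δ : ℝ} (hxy : x < y)
    (hf : IntervalIntegrable f volume x y) (hδ : ∀ r ∈ Ioc x y, ‖f r - c‖ ≤ δ) :
    ‖(y - x)⁻¹ • (∫ r in x..y, f r) - c‖ ≤ δ := by
  have hyx : 0 < y - x := sub_pos.2 hxy
  have hmean : (y - x)⁻¹ • (∫ r in x..y, f r) - c = (y - x)⁻¹ • ∫ r in x..y, (f r - c) := by
    rw [intervalIntegral.integral_sub hf intervalIntegrable_const, intervalIntegral.integral_const,
      smul_sub, inv_smul_smul₀ hyx.ne']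
  have hbound : ‖∫ r in x..y, (f r - c)‖ ≤ δ * (y - x) := by
    have := intervalIntegral.norm_integral_le_of_norm_le_const (uIoc_of_le hxy.le ▸ hδ)
    rwa [abs_of_pos hyx] at this
  rw [hmean, norm_smul, Real.norm_of_nonneg (inv_nonneg.2 hyx.le)]
  calc (y - x)⁻¹ * ‖∫ r in x..y, (f r - c)‖ ≤ (y - x)⁻¹ * (δ * (y - x)) := by gcongr
    _ = δ := by field_simp

theorem tendsto_inv_smul_integral_of_tendsto_image_smallSets {ι E : Type*}
    [NormedAddCommGroup E] [NormedSpace ℝ E] [CompleteSpace E] {l : Filter ι} {F : ι → ℝ → E}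
    {h : ι → ℝ} {t : ℝ} {c : E} (hh : ∀ᶠ i in l, 0 < h i)
    (hF_int : ∀ᶠ i in l, IntervalIntegrable (F i) volume (t - h i) t)
    (hF : Tendsto (fun i => F i '' Ioc (t - h i) t) l (𝓝 c).smallSets) :
    Tendsto (fun i => (h i)⁻¹ • ∫ r in (t - h i)..t, F i r) l (𝓝 c) := by
  refine Metric.tendsto_nhds.2 fun δ hδ => ?_
  have hball := (tendsto_smallSets_iff.1 hF) _ (Metric.closedBall_mem_nhds c (half_pos hδ))
  filter_upwards [hh, hF_int, hball] with i hi hint hsub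
  have hle := norm_inv_smul_integral_sub_le (sub_lt_self t hi) hint
    fun r hr => mem_closedBall_iff_norm.1 (hsub (mem_image_of_mem _ hr))
  rw [sub_sub_cancel] at hle
  exact (dist_eq_norm _ _).trans_lt (hle.trans_lt (half_lt_self hδ))

theorem TendstoUniformlyOn.tendsto_image_smallSets {ι α β : Type*} [TopologicalSpace α]
    [UniformSpace β] {F : ι → α → β} {f : α → β} {p : Filter ι} {S : Set α} {x : α}
    {W : ι → Set α} (hF : TendstoUniformlyOn F f p S) (hf : ContinuousWithinAt f S x)
    (hW : Tendsto W p (𝓝[S] x).smallSets) :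
    Tendsto (fun i => F i '' W i) p (𝓝 (f x)).smallSets := by
  refine tendsto_smallSets_iff.2 fun V hV => ?_
  obtain ⟨U₀, hU₀, hballV⟩ := UniformSpace.mem_nhds_iff.1 hV
  obtain ⟨U, hU, hUU⟩ := comp_mem_uniformity_sets hU₀
  have hnear : {y | (f x, f y) ∈ U} ∩ S ∈ 𝓝[S] x :=
    inter_mem (Uniform.continuousWithinAt_iff'_right.1 hf hU) self_mem_nhdsWithin
  filter_upwards [tendsto_smallSets_iff.1 hW _ hnear, hF U hU] with i hWi hFi
  rintro _ ⟨y, hy, rfl⟩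
  exact hballV (hUU (SetRel.prodMk_mem_comp (hWi hy).1 (hFi y (hWi hy).2)))

theorem intervalIntegral.integral_sub_integral_eq_of_eqOn_Ioo {E : Type*} [NormedAddCommGroup E]
    [NormedSpace ℝ E] {f g : ℝ → E} {a c t : ℝ} (hac : a ≤ c) (hct : c ≤ t)
    (hf : IntervalIntegrable f volume a t) (hg : IntervalIntegrable g volume a t)
    (hfg : EqOn f g (Ioo a c)) :
    (∫ r in a..t, f r) - ∫ r in a..t, g r = (∫ r in c..t, f r) - ∫ r in c..t, g r := by
  have hsub : uIcc a c ⊆ uIcc a t := uIcc_subset_uIcc_left (Icc_subset_uIcc ⟨hac, hct⟩)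
  rw [← intervalIntegral.integral_interval_sub_left hf (hf.mono_set hsub),
    ← intervalIntegral.integral_interval_sub_left hg (hg.mono_set hsub),
    intervalIntegral.integral_congr_Ioo_of_le hac hfg]
  abel

theorem tendsto_const_mul_nhdsGT_zero {l : ℝ} (hl : 0 < l) :
    Tendsto (fun s : ℝ => l * s) (𝓝[>] 0) (𝓝[>] 0) :=
  tendsto_comap.mono_left (comap_mulLeft_nhdsGT_zero hl).ge

theorem tendsto_sub_const_mul_nhdsLE {l : ℝ} (hl : 0 < l) (t : ℝ) :
    Tendsto (fun s : ℝ => t - l * s) (𝓝[>] 0) (𝓝[≤] t) := by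
  have hscale := tendsto_nhdsWithin_iff.1 (tendsto_const_mul_nhdsGT_zero hl)
  refine tendsto_nhdsWithin_iff.2 ⟨by simpa using hscale.1.const_sub t, ?_⟩
  filter_upwards [hscale.2] with s hs
  exact sub_le_self t (le_of_lt hs)

theorem tendsto_inv_smul_integral_comp_of_tendstoUniformlyOn {E F : Type*}
    [NormedAddCommGroup E] [NormedSpace ℝ E] [CompleteSpace E] [UniformSpace F]
    {g : F → E} {Y : ℝ → ℝ → F} {y : ℝ → F} {a t l : ℝ} (hg : ContinuousAt g (y t))
    (hat : a < t) (hl : 0 < l) (hY : TendstoUniformlyOn Y y (𝓝[>] 0) (Icc a t))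
    (hy : ContinuousWithinAt y (Icc a t) t)
    (hint : ∀ᶠ s in 𝓝[>] 0, IntervalIntegrable (fun r => g (Y s r)) volume (t - l * s) t) :
    Tendsto (fun s => (l * s)⁻¹ • ∫ r in (t - l * s)..t, g (Y s r)) (𝓝[>] 0) (𝓝 (g (y t))) := by
  have hW : Tendsto (fun s => Ioc (t - l * s) t) (𝓝[>] 0) (𝓝[Icc a t] t).smallSets := by
    rw [nhdsWithin_Icc_eq_nhdsLE hat]
    exact (tendsto_sub_const_mul_nhdsLE hl t).Ioc (tendsto_const_nhdsWithin self_mem_Iic)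
  refine tendsto_inv_smul_integral_of_tendsto_image_smallSets
    (tendsto_nhdsWithin_iff.1 (tendsto_const_mul_nhdsGT_zero hl)).2 hint ?_
  simpa only [image_image, Function.comp_def] using
    hg.tendsto.image_smallSets.comp (hY.tendsto_image_smallSets hy hW)

section Needle

variable {E U : Type*} [NormedAddCommGroup E] {X : E × U → E} {γ y : ℝ → E}
  {u v : ℝ → U} {u₁ : U} {a c t : ℝ}

theorem intervalIntegrable_needle (hac : a ≤ c) (hct : c ≤ t)
    (hv : ∀ r, v r = if c ≤ r ∧ r ≤ t then u₁ else u r)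
    (hy : IntervalIntegrable (fun r => X (y r, v r)) volume a t) :
    IntervalIntegrable (fun r => X (y r, u₁)) volume c t := by
  refine (hy.mono_set (uIcc_subset_uIcc_right (Icc_subset_uIcc ⟨hac, hct⟩))).congr fun r hr => ?_
  rw [uIoc_of_le hct] at hr
  simp only [hv, if_pos (show c ≤ r ∧ r ≤ t from ⟨hr.1.le, hr.2⟩)]

theorem sub_eq_integral_needle_sub [NormedSpace ℝ E] (hac : a ≤ c) (hct : c ≤ t)
    (hv : ∀ r, v r = if c ≤ r ∧ r ≤ t then u₁ else u r)
    (hγ_int : IntervalIntegrable (fun r => X (γ r, u r)) volume a t)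
    (hy_int : IntervalIntegrable (fun r => X (y r, v r)) volume a t)
    (hγ : γ t = γ a + ∫ r in a..t, X (γ r, u r)) (hy : y t = γ a + ∫ r in a..t, X (y r, v r))
    (hyγ : EqOn y γ (Ioo a c)) :
    y t - γ t = (∫ r in c..t, X (y r, u₁)) - ∫ r in c..t, X (γ r, u r) := by
  have hbefore : EqOn (fun r => X (y r, v r)) (fun r => X (γ r, u r)) (Ioo a c) := fun r hr => by
    simp only [hyγ hr, hv, if_neg (show ¬(c ≤ r ∧ r ≤ t) from fun h => h.1.not_gt hr.2)]
  have hwindow : EqOn (fun r => X (y r, v r)) (fun r => X (y r, u₁)) (uIcc c t) := fun r hr => by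
    rw [uIcc_of_le hct] at hr
    simp only [hv, if_pos (show c ≤ r ∧ r ≤ t from hr)]
  rw [hy, hγ, add_sub_add_left_eq_sub,
    intervalIntegral.integral_sub_integral_eq_of_eqOn_Ioo hac hct hy_int hγ_int hbefore,
    intervalIntegral.integral_congr hwindow]

end Needle

theorem elementary_perturbation_vector_general
    (m k : ℕ)
    (X : EuclideanSpace ℝ (Fin m) × EuclideanSpace ℝ (Fin k) → EuclideanSpace ℝ (Fin m))
    (hX : Continuous X)
    (a b : ℝ)
    (u : ℝ → EuclideanSpace ℝ (Fin k))
    (γ : ℝ → EuclideanSpace ℝ (Fin m)) (hγc : Continuous γ)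
    (hint : IntervalIntegrable (fun r => X (γ r, u r)) volume a b)
    (hγ : ∀ t ∈ Icc a b, γ t = γ a + ∫ r in a..t, X (γ r, u r))
    (t₁ : ℝ) (ht₁ : t₁ ∈ Ioo a b) (l₁ : ℝ) (hl₁ : 0 < l₁)
    (u₁ : EuclideanSpace ℝ (Fin k))
    (hLeb : Tendsto (fun h : ℝ => (1 / h) • ∫ r in (t₁ - h)..t₁, X (γ r, u r))
      (nhdsWithin 0 (Ioi 0)) (nhds (X (γ t₁, u t₁))))
    (ε : ℝ) (hε : 0 < ε)
    (us : ℝ → ℝ → EuclideanSpace ℝ (Fin k))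
    (hus : ∀ s r : ℝ, us s r = if t₁ - l₁ * s ≤ r ∧ r ≤ t₁ then u₁ else u r)
    (γs : ℝ → ℝ → EuclideanSpace ℝ (Fin m))
    (hγsint : ∀ s ∈ Ioc (0 : ℝ) ε,
      IntervalIntegrable (fun r => X (γs s r, us s r)) volume a t₁)
    (hγs : ∀ s ∈ Ioc (0 : ℝ) ε, ∀ t ∈ Icc a t₁,
      γs s t = γ a + ∫ r in a..t, X (γs s r, us s r))
    (hagree : ∀ s ∈ Ioc (0 : ℝ) ε, ∀ t ∈ Icc a (t₁ - l₁ * s), γs s t = γ t)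
    (hunif : TendstoUniformlyOn (fun s t => γs s t) γ (nhdsWithin 0 (Ioi 0)) (Icc a t₁)) :
    Tendsto (fun s : ℝ => (1 / s) • (γs s t₁ - γ t₁)) (nhdsWithin 0 (Ioi 0))
      (nhds (l₁ • (X (γ t₁, u₁) - X (γ t₁, u t₁)))) := by
  have hsmall : ∀ᶠ s in 𝓝[>] 0, s ∈ Ioc 0 ε ∧ t₁ - l₁ * s ∈ Ioc a t₁ :=
    Eventually.and (Ioc_mem_nhdsGT hε) (tendsto_sub_const_mul_nhdsLE hl₁ t₁ (Ioc_mem_nhdsLE ht₁.1))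
  have hnominal : Tendsto (fun s => (l₁ * s)⁻¹ • ∫ r in (t₁ - l₁ * s)..t₁, X (γ r, u r))
      (𝓝[>] 0) (𝓝 (X (γ t₁, u t₁))) := by
    simpa only [one_div, Function.comp_def] using hLeb.comp (tendsto_const_mul_nhdsGT_zero hl₁)
  have hperturbed : Tendsto (fun s => (l₁ * s)⁻¹ • ∫ r in (t₁ - l₁ * s)..t₁, X (γs s r, u₁))
      (𝓝[>] 0) (𝓝 (X (γ t₁, u₁))) := by
    refine tendsto_inv_smul_integral_comp_of_tendstoUniformlyOn (g := fun y => X (y, u₁))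
      (hX.comp (continuous_id.prodMk continuous_const)).continuousAt ht₁.1 hl₁ hunif
      hγc.continuousWithinAt ?_
    filter_upwards [hsmall] with s ⟨hs, hc⟩
    exact intervalIntegrable_needle hc.1.le hc.2 (hus s) (hγsint s hs)
  have hγ_int : IntervalIntegrable (fun r => X (γ r, u r)) volume a t₁ :=
    hint.mono_set (uIcc_subset_uIcc_left (Icc_subset_uIcc (Ioo_subset_Icc_self ht₁)))
  refine ((hperturbed.sub hnominal).const_smul l₁).congr' ?_
  filter_upwards [hsmall] with s ⟨hs, hc⟩
  rw [sub_eq_integral_needle_sub hc.1.le hc.2 (hus s) hγ_int (hγsint s hs)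
    (hγ t₁ (Ioo_subset_Icc_self ht₁)) (hγs s hs t₁ ⟨ht₁.1.le, le_rfl⟩)
    fun r hr => hagree s hs r (Ioo_subset_Icc_self hr), ← smul_sub, smul_smul, one_div]
  congr 1
  field_simp

theorem elementary_perturbation_vector
    (m k : ℕ)
    (X : EuclideanSpace ℝ (Fin m) × EuclideanSpace ℝ (Fin k) → EuclideanSpace ℝ (Fin m))
    (hX : Continuous X)
    (a b : ℝ) (hab : a < b)
    (u : ℝ → EuclideanSpace ℝ (Fin k))
    (γ : ℝ → EuclideanSpace ℝ (Fin m)) (hγc : Continuous γ)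
    (hint : IntervalIntegrable (fun r => X (γ r, u r)) volume a b)
    (hγ : ∀ t ∈ Icc a b, γ t = γ a + ∫ r in a..t, X (γ r, u r))
    (t₁ : ℝ) (ht₁ : t₁ ∈ Ioo a b) (l₁ : ℝ) (hl₁ : 0 < l₁)
    (u₁ : EuclideanSpace ℝ (Fin k))
    (hLeb : Tendsto (fun h : ℝ => (1 / h) • ∫ r in (t₁ - h)..t₁, X (γ r, u r))
      (nhdsWithin 0 (Ioi 0)) (nhds (X (γ t₁, u t₁))))
    (ε : ℝ) (hε : 0 < ε) (hεa : a < t₁ - l₁ * ε)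
    (us : ℝ → ℝ → EuclideanSpace ℝ (Fin k))
    (hus : ∀ s r : ℝ, us s r = if t₁ - l₁ * s ≤ r ∧ r ≤ t₁ then u₁ else u r)
    (γs : ℝ → ℝ → EuclideanSpace ℝ (Fin m))
    (hγsc : ∀ s ∈ Ioc (0 : ℝ) ε, Continuous (γs s))
    (hγsint : ∀ s ∈ Ioc (0 : ℝ) ε,
      IntervalIntegrable (fun r => X (γs s r, us s r)) volume a t₁)
    (hγs : ∀ s ∈ Ioc (0 : ℝ) ε, ∀ t ∈ Icc a t₁,
      γs s t = γ a + ∫ r in a..t, X (γs s r, us s r))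
    (hagree : ∀ s ∈ Ioc (0 : ℝ) ε, ∀ t ∈ Icc a (t₁ - l₁ * s), γs s t = γ t)
    (hunif : TendstoUniformlyOn (fun s t => γs s t) γ (nhdsWithin 0 (Ioi 0)) (Icc a t₁)) :
    Tendsto (fun s : ℝ => (1 / s) • (γs s t₁ - γ t₁)) (nhdsWithin 0 (Ioi 0))
      (nhds (l₁ • (X (γ t₁, u₁) - X (γ t₁, u t₁)))) :=
  elementary_perturbation_vector_general m k X hX a b u γ hγc hint hγ t₁ ht₁ l₁ hl₁ u₁ hLeb ε hε us
    hus γs hγsint hγs hagree hunif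
end

section
/- Let m, k ∈ ℕ, let X : ℝᵐ × ℝᵏ → ℝᵐ be continuous, let a < b, let u : ℝ → ℝᵏ, and let γ : ℝ → ℝᵐ be continuous with r ↦ X(γ(r), u(r)) integrable on [a,b] and γ(t) = γ(a) + ∫_a^t X(γ(r), u(r)) dr for all t ∈ [a,b]. Let t₁ ∈ (a,b), l₁' > 0, l₁'' > 0, u₁', u₁'' ∈ ℝᵏ, and assume t₁ is a Lebesgue time for X∘(γ,u), i.e. (1/h)·∫_{t₁−h}^{t₁} X(γ(r), u(r)) dr → X(γ(t₁), u(t₁)) as h → 0⁺. Let ε > 0 with t₁ − (l₁' + l₁'')ε > a, and for each s ∈ (0, ε] let γₛ : ℝ → ℝᵐ be continuous with r ↦ X(γₛ(r), u[π₁₁ˢ](r)) integrable on [a,t₁] and γₛ(t) = γ(a) + ∫_a^t X(γₛ(r), u[π₁₁ˢ](r)) dr for all t ∈ [a,t₁], where u[π₁₁ˢ](r) = u₁' for r ∈ [t₁ − (l₁' + l₁'')s, t₁ − l₁''s), u[π₁₁ˢ](r) = u₁'' for r ∈ [t₁ − l₁''s, t₁], and u[π₁₁ˢ](r) = u(r)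 otherwise. Assume moreover that γₛ(t) = γ(t) for all t ∈ [a, t₁ − (l₁' + l₁'')s] and that sup_{t ∈ [a,t₁]} ‖γₛ(t) − γ(t)‖ → 0 as s → 0⁺. Then (γₛ(t₁) − γ(t₁))/s → l₁'·(X(γ(t₁), u₁') − X(γ(t₁), u(t₁))) + l₁''·(X(γ(t₁), u₁'') − X(γ(t₁), u(t₁))) as s → 0⁺; i.e. the tangent vector at s = 0 of the doubly perturbed trajectory is the sum v[π₁'] + v[π₁''] of the two elementary perturbation vectors. -/
open MeasureTheory Set Filter

/-- Auxiliary lemma: an averaged integral over a shrinking interval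
`[t₁ - α s, t₁ - β s]` of a family `g s` that is uniformly close to `v`
tends to `(α - β) • v` after division by `s`. -/
lemma avg_tendsto_aux {E : Type*} [NormedAddCommGroup E] [NormedSpace ℝ E] [CompleteSpace E]
    (t₁ α β ε : ℝ) (hαβ : β ≤ α) (hε : 0 < ε)
    (g : ℝ → ℝ → E) (v : E)
    (hint : ∀ s ∈ Ioc (0:ℝ) ε,
      IntervalIntegrable (g s) volume (t₁ - α*s) (t₁ - β*s))
    (hsmall : ∀ δ > (0:ℝ), ∀ᶠ s in nhdsWithin 0 (Ioi 0),
      ∀ r ∈ Icc (t₁ - α*s) (t₁ - β*s), ‖g s r - v‖ ≤ δ) :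
    Tendsto (fun s => (1/s) • ∫ r in (t₁ - α*s)..(t₁ - β*s), g s r)
      (nhdsWithin 0 (Ioi 0)) (nhds ((α - β) • v)) := by
  rw [Metric.tendsto_nhds]
  intro δ hδ
  have hd : (0:ℝ) < α - β + 1 := by linarith
  have hδ' : (0:ℝ) < δ / (α - β + 1) := div_pos hδ hd
  filter_upwards [hsmall _ hδ', Ioc_mem_nhdsGT hε] with s hs1 hs2
  obtain ⟨hs0, hsε⟩ := hs2
  have hcd : t₁ - α*s ≤ t₁ - β*s := by nlinarith
  have hI := hint s ⟨hs0, hsε⟩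
  have hconst : (∫ _r in (t₁ - α*s)..(t₁ - β*s), v) = ((α - β)*s) • v := by
    rw [intervalIntegral.integral_const]; congr 1; ring
  have hkey : (∫ r in (t₁ - α*s)..(t₁ - β*s), (g s r - v))
      = (∫ r in (t₁ - α*s)..(t₁ - β*s), g s r) - ((α - β)*s) • v := by
    rw [intervalIntegral.integral_sub hI intervalIntegrable_const, hconst]
  have hbound : ‖∫ r in (t₁ - α*s)..(t₁ - β*s), (g s r - v)‖
      ≤ (δ / (α - β + 1)) * ((α - β) * s) := by
    have h1 := intervalIntegral.norm_integral_le_of_norm_le_const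
      (C := δ / (α - β + 1)) (a := t₁ - α*s) (b := t₁ - β*s)
      (f := fun r => g s r - v) ?_
    · have habs : |(t₁ - β*s) - (t₁ - α*s)| = (α - β) * s := by
        rw [abs_of_nonneg (by nlinarith)]; ring
      rwa [habs] at h1
    · intro r hr
      rw [Set.uIoc_of_le hcd] at hr
      exact hs1 r ⟨le_of_lt hr.1, hr.2⟩
  have hsmul : ((α - β) : ℝ) • v = (1/s) • (((α - β)*s) • v) := by
    rw [smul_smul]
    congr 1
    field_simp
  rw [dist_eq_norm, hsmul, ← smul_sub, ← hkey, norm_smul]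
  have : |1/s| * ‖∫ r in (t₁ - α*s)..(t₁ - β*s), (g s r - v)‖
      ≤ (1/s) * ((δ / (α - β + 1)) * ((α - β) * s)) := by
    rw [abs_of_pos (by positivity : (0:ℝ) < 1/s)]
    exact mul_le_mul_of_nonneg_left hbound (by positivity)
  calc |1/s| * ‖∫ r in (t₁ - α*s)..(t₁ - β*s), (g s r - v)‖
      ≤ (1/s) * ((δ / (α - β + 1)) * ((α - β) * s)) := this
    _ = δ * ((α - β) / (α - β + 1)) := by field_simp
    _ < δ * 1 := by
        apply mul_lt_mul_of_pos_left _ hδ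
        rw [div_lt_one hd]; linarith
    _ = δ := mul_one δ

theorem double_perturbation_vector_same_time
    (m k : ℕ)
    (X : EuclideanSpace ℝ (Fin m) × EuclideanSpace ℝ (Fin k) → EuclideanSpace ℝ (Fin m))
    (hX : Continuous X)
    (a b : ℝ) (hab : a < b)
    (u : ℝ → EuclideanSpace ℝ (Fin k))
    (γ : ℝ → EuclideanSpace ℝ (Fin m)) (hγc : Continuous γ)
    (hint : IntervalIntegrable (fun r => X (γ r, u r)) volume a b)
    (hγ : ∀ t ∈ Icc a b, γ t = γ a + ∫ r in a..t, X (γ r, u r))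
    (t₁ : ℝ) (ht₁ : t₁ ∈ Ioo a b)
    (l₁' l₁'' : ℝ) (hl₁' : 0 < l₁') (hl₁'' : 0 < l₁'')
    (u₁' u₁'' : EuclideanSpace ℝ (Fin k))
    (hLeb : Tendsto (fun h : ℝ => (1 / h) • ∫ r in (t₁ - h)..t₁, X (γ r, u r))
      (nhdsWithin 0 (Ioi 0)) (nhds (X (γ t₁, u t₁))))
    (ε : ℝ) (hε : 0 < ε) (hεa : a < t₁ - (l₁' + l₁'') * ε)
    (us : ℝ → ℝ → EuclideanSpace ℝ (Fin k))
    (hus : ∀ s r : ℝ, us s r =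
      if t₁ - (l₁' + l₁'') * s ≤ r ∧ r < t₁ - l₁'' * s then u₁'
      else if t₁ - l₁'' * s ≤ r ∧ r ≤ t₁ then u₁''
      else u r)
    (γs : ℝ → ℝ → EuclideanSpace ℝ (Fin m))
    (hγsc : ∀ s ∈ Ioc (0 : ℝ) ε, Continuous (γs s))
    (hγsint : ∀ s ∈ Ioc (0 : ℝ) ε,
      IntervalIntegrable (fun r => X (γs s r, us s r)) volume a t₁)
    (hγs : ∀ s ∈ Ioc (0 : ℝ) ε, ∀ t ∈ Icc a t₁,
      γs s t = γ a + ∫ r in a..t, X (γs s r, us s r))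
    (hagree : ∀ s ∈ Ioc (0 : ℝ) ε, ∀ t ∈ Icc a (t₁ - (l₁' + l₁'') * s), γs s t = γ t)
    (hunif : TendstoUniformlyOn (fun s t => γs s t) γ (nhdsWithin 0 (Ioi 0)) (Icc a t₁)) :
    Tendsto (fun s : ℝ => (1 / s) • (γs s t₁ - γ t₁)) (nhdsWithin 0 (Ioi 0))
      (nhds (l₁' • (X (γ t₁, u₁') - X (γ t₁, u t₁)) +
        l₁'' • (X (γ t₁, u₁'') - X (γ t₁, u t₁)))) := by
  obtain ⟨hat₁, ht₁b⟩ := ht₁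
  have hLpos : (0:ℝ) < l₁' + l₁'' := by linarith
  -- closeness claim: for small s > 0, γs s r is close to γ t₁ on [t₁ - L s, t₁]
  have claim_close : ∀ η > (0:ℝ), ∀ᶠ s in nhdsWithin 0 (Ioi 0),
      ∀ r ∈ Icc (t₁ - (l₁' + l₁'') * s) t₁, dist (γs s r) (γ t₁) < η := by
    intro η hη
    obtain ⟨ρ, hρ, hρc⟩ := Metric.continuous_iff.mp hγc t₁ (η/2) (by linarith)
    have hu := Metric.tendstoUniformlyOn_iff.mp hunif (η/2) (by linarith)
    have hsm : Ioo (0:ℝ) (min ε (ρ / (l₁' + l₁''))) ∈ nhdsWithin (0:ℝ) (Ioi 0) :=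
      Ioo_mem_nhdsGT_of_mem ⟨le_refl _, lt_min hε (by positivity)⟩
    filter_upwards [hu, hsm] with s hs1 hs2 r hr
    obtain ⟨hs0, hsm'⟩ := hs2
    have hsε : s < ε := lt_of_lt_of_le hsm' (min_le_left _ _)
    have hsρ : s < ρ / (l₁' + l₁'') := lt_of_lt_of_le hsm' (min_le_right _ _)
    have hra : a ≤ r := by nlinarith [hr.1]
    have hrt : r ≤ t₁ := hr.2
    have h1 : dist (γs s r) (γ r) < η/2 := by
      rw [dist_comm]; exact hs1 r ⟨hra, hrt⟩
    have h2 : dist (γ r) (γ t₁) < η/2 := by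
      apply hρc
      rw [Real.dist_eq, abs_of_nonpos (by linarith)]
      have : t₁ - r ≤ (l₁' + l₁'') * s := by linarith [hr.1]
      calc -(r - t₁) = t₁ - r := by ring
        _ ≤ (l₁' + l₁'') * s := this
        _ < (l₁' + l₁'') * (ρ / (l₁' + l₁'')) :=
            mul_lt_mul_of_pos_left hsρ hLpos
        _ = ρ := by field_simp
    calc dist (γs s r) (γ t₁) ≤ dist (γs s r) (γ r) + dist (γ r) (γ t₁) :=
          dist_triangle _ _ _
      _ < η/2 + η/2 := add_lt_add h1 h2
      _ = η := by ring
  -- first piece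
  have h1 : Tendsto
      (fun s => (1/s) • ∫ r in (t₁ - (l₁' + l₁'')*s)..(t₁ - l₁''*s), X (γs s r, u₁'))
      (nhdsWithin 0 (Ioi 0)) (nhds (((l₁' + l₁'') - l₁'') • X (γ t₁, u₁'))) := by
    apply avg_tendsto_aux t₁ (l₁' + l₁'') l₁'' ε (by linarith) hε
    · intro s hs
      exact ((hX.comp ((hγsc s hs).prodMk continuous_const)).intervalIntegrable _ _)
    · intro δ hδ
      obtain ⟨η, hη, hηc⟩ := Metric.continuous_iff.mp
        (hX.comp (continuous_id.prodMk (continuous_const (y := u₁')))) (γ t₁) δ hδ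
      filter_upwards [claim_close η hη, self_mem_nhdsWithin] with s hs1 hs2 r hr
      have hs0 : (0:ℝ) < s := hs2
      have hr' : r ∈ Icc (t₁ - (l₁' + l₁'') * s) t₁ := ⟨hr.1, by nlinarith [hr.2]⟩
      have := hηc (γs s r) (hs1 r hr')
      rw [← dist_eq_norm]
      exact le_of_lt this
  -- second piece
  have h2' : Tendsto
      (fun s => (1/s) • ∫ r in (t₁ - l₁''*s)..(t₁ - 0*s), X (γs s r, u₁''))
      (nhdsWithin 0 (Ioi 0)) (nhds ((l₁'' - 0) • X (γ t₁, u₁''))) := by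
    apply avg_tendsto_aux t₁ l₁'' 0 ε (by linarith) hε
    · intro s hs
      exact ((hX.comp ((hγsc s hs).prodMk continuous_const)).intervalIntegrable _ _)
    · intro δ hδ
      obtain ⟨η, hη, hηc⟩ := Metric.continuous_iff.mp
        (hX.comp (continuous_id.prodMk (continuous_const (y := u₁'')))) (γ t₁) δ hδ
      filter_upwards [claim_close η hη, self_mem_nhdsWithin] with s hs1 hs2 r hr
      have hs0 : (0:ℝ) < s := hs2
      have hr' : r ∈ Icc (t₁ - (l₁' + l₁'') * s) t₁ := by
        constructor
        · have := hr.1; nlinarith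
        · have := hr.2; nlinarith
      have := hηc (γs s r) (hs1 r hr')
      rw [← dist_eq_norm]
      exact le_of_lt this
  have h2 : Tendsto
      (fun s => (1/s) • ∫ r in (t₁ - l₁''*s)..t₁, X (γs s r, u₁''))
      (nhdsWithin 0 (Ioi 0)) (nhds (l₁'' • X (γ t₁, u₁''))) := by
    simpa using h2'
  -- third piece, from the Lebesgue point hypothesis
  have h3 : Tendsto
      (fun s => (1/s) • ∫ r in (t₁ - (l₁' + l₁'')*s)..t₁, X (γ r, u r))
      (nhdsWithin 0 (Ioi 0)) (nhds ((l₁' + l₁'') • X (γ t₁, u t₁))) := by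
    have hcomp : Tendsto (fun s : ℝ => (l₁' + l₁'') * s)
        (nhdsWithin 0 (Ioi 0)) (nhdsWithin 0 (Ioi 0)) := by
      rw [tendsto_nhdsWithin_iff]
      constructor
      · have : Tendsto (fun s : ℝ => (l₁' + l₁'') * s) (nhds 0) (nhds ((l₁' + l₁'') * 0)) :=
          (continuous_const.mul continuous_id).tendsto 0
        rw [mul_zero] at this
        exact this.mono_left nhdsWithin_le_nhds
      · filter_upwards [self_mem_nhdsWithin] with s hs
        exact mul_pos hLpos hs
    have hc := (hLeb.comp hcomp).const_smul (l₁' + l₁'')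
    apply hc.congr'
    filter_upwards [self_mem_nhdsWithin] with s hs
    have hs0 : (0:ℝ) < s := hs
    show (l₁' + l₁'') • ((1 / ((l₁' + l₁'') * s)) •
        ∫ r in (t₁ - (l₁' + l₁'') * s)..t₁, X (γ r, u r)) = _
    rw [smul_smul]
    congr 1
    field_simp
  -- key algebraic identity for each small s
  have key : ∀ᶠ s in nhdsWithin 0 (Ioi 0),
      (fun s => (1/s) • ∫ r in (t₁ - (l₁' + l₁'')*s)..(t₁ - l₁''*s), X (γs s r, u₁')) s
      + (fun s => (1/s) • ∫ r in (t₁ - l₁''*s)..t₁, X (γs s r, u₁'')) s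
      - (fun s => (1/s) • ∫ r in (t₁ - (l₁' + l₁'')*s)..t₁, X (γ r, u r)) s
      = (1/s) • (γs s t₁ - γ t₁) := by
    filter_upwards [Ioc_mem_nhdsGT hε] with s hs
    obtain ⟨hs0, hsε⟩ := hs
    set c := t₁ - (l₁' + l₁'') * s with hc
    set d := t₁ - l₁'' * s with hd
    have hac : a < c := by
      have : (l₁' + l₁'') * s ≤ (l₁' + l₁'') * ε := by nlinarith
      calc a < t₁ - (l₁' + l₁'') * ε := hεa
        _ ≤ c := by rw [hc]; linarith
    have hcd : c ≤ d := by rw [hc, hd]; nlinarith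
    have hdt : d ≤ t₁ := by rw [hd]; nlinarith
    have hat : a ≤ t₁ := le_of_lt hat₁
    have hsub : ∀ p q : ℝ, a ≤ p → q ≤ t₁ → p ≤ q → uIcc p q ⊆ uIcc a t₁ := by
      intro p q hp hq hpq
      rw [uIcc_of_le hpq, uIcc_of_le hat]
      exact Icc_subset_Icc hp hq
    have hsI : s ∈ Ioc (0:ℝ) ε := ⟨hs0, hsε⟩
    have hIs : IntervalIntegrable (fun r => X (γs s r, us s r)) volume a t₁ :=
      hγsint s hsI
    have hIac : IntervalIntegrable (fun r => X (γs s r, us s r)) volume a c :=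
      hIs.mono_set (hsub a c (le_refl _) (le_trans hcd hdt) hac.le)
    have hIcd : IntervalIntegrable (fun r => X (γs s r, us s r)) volume c d :=
      hIs.mono_set (hsub c d hac.le hdt hcd)
    have hIad : IntervalIntegrable (fun r => X (γs s r, us s r)) volume a d :=
      hIs.mono_set (hsub a d (le_refl _) hdt (le_trans hac.le hcd))
    have hIdt : IntervalIntegrable (fun r => X (γs s r, us s r)) volume d t₁ :=
      hIs.mono_set (hsub d t₁ (le_trans hac.le hcd) (le_refl _) hdt)
    have hsubf : ∀ p q : ℝ, a ≤ p → q ≤ b → p ≤ q → uIcc p q ⊆ uIcc a b := by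
      intro p q hp hq hpq
      rw [uIcc_of_le hpq, uIcc_of_le (le_of_lt hab)]
      exact Icc_subset_Icc hp hq
    have hIfac : IntervalIntegrable (fun r => X (γ r, u r)) volume a c :=
      hint.mono_set (hsubf a c (le_refl _) (by linarith) hac.le)
    have hIfct : IntervalIntegrable (fun r => X (γ r, u r)) volume c t₁ :=
      hint.mono_set (hsubf c t₁ hac.le (le_of_lt ht₁b) (le_trans hcd hdt))
    -- splitting the integrals
    have split_s : (∫ r in a..t₁, X (γs s r, us s r))
        = (∫ r in a..c, X (γs s r, us s r)) + (∫ r in c..d, X (γs s r, us s r))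
          + (∫ r in d..t₁, X (γs s r, us s r)) := by
      rw [intervalIntegral.integral_add_adjacent_intervals hIac hIcd,
        intervalIntegral.integral_add_adjacent_intervals hIad hIdt]
    have split_f : (∫ r in a..t₁, X (γ r, u r))
        = (∫ r in a..c, X (γ r, u r)) + (∫ r in c..t₁, X (γ r, u r)) := by
      rw [intervalIntegral.integral_add_adjacent_intervals hIfac hIfct]
    -- congruences
    have hne : ∀ x : ℝ, (∀ᵐ r : ℝ ∂volume, r ≠ x) := by
      intro x
      have h0 : (volume : Measure ℝ) {x} = 0 := measure_singleton x
      have := measure_eq_zero_iff_ae_notMem.mp h0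
      simpa using this
    have e1 : (∫ r in a..c, X (γs s r, us s r)) = ∫ r in a..c, X (γ r, u r) := by
      apply intervalIntegral.integral_congr_ae
      filter_upwards [hne c] with r hr hrm
      rw [Set.uIoc_of_le hac.le] at hrm
      have hrc : r < c := lt_of_le_of_ne hrm.2 hr
      have hγeq : γs s r = γ r := hagree s hsI r ⟨le_of_lt hrm.1, hrm.2⟩
      rw [hγeq, hus]
      rw [if_neg, if_neg]
      · intro hcon; have := hcon.1; rw [← hd] at this; linarith [lt_of_lt_of_le hrc hcd]
      · intro hcon; have := hcon.1; rw [← hc] at this; linarith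
    have e2 : (∫ r in c..d, X (γs s r, us s r)) = ∫ r in c..d, X (γs s r, u₁') := by
      apply intervalIntegral.integral_congr_ae
      filter_upwards [hne d] with r hr hrm
      rw [Set.uIoc_of_le hcd] at hrm
      have hrd : r < d := lt_of_le_of_ne hrm.2 hr
      rw [hus, if_pos]
      rw [← hc, ← hd]
      exact ⟨le_of_lt hrm.1, hrd⟩
    have e3 : (∫ r in d..t₁, X (γs s r, us s r)) = ∫ r in d..t₁, X (γs s r, u₁'') := by
      apply intervalIntegral.integral_congr
      intro r hrm
      rw [uIcc_of_le hdt] at hrm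
      show X (γs s r, us s r) = X (γs s r, u₁'')
      have hn1 : ¬(t₁ - (l₁' + l₁'') * s ≤ r ∧ r < t₁ - l₁'' * s) := by
        rintro ⟨-, h2'⟩
        rw [← hd] at h2'
        exact absurd hrm.1 (not_le.mpr h2')
      have hy : t₁ - l₁'' * s ≤ r ∧ r ≤ t₁ := by
        refine ⟨?_, hrm.2⟩
        rw [← hd]; exact hrm.1
      rw [hus, if_neg hn1, if_pos hy]
    have hγst : γs s t₁ = γ a + ∫ r in a..t₁, X (γs s r, us s r) :=
      hγs s hsI t₁ ⟨hat, le_refl _⟩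
    have hγt : γ t₁ = γ a + ∫ r in a..t₁, X (γ r, u r) :=
      hγ t₁ ⟨hat, le_of_lt ht₁b⟩
    have hdiff : γs s t₁ - γ t₁
        = (∫ r in c..d, X (γs s r, u₁')) + (∫ r in d..t₁, X (γs s r, u₁''))
          - (∫ r in c..t₁, X (γ r, u r)) := by
      rw [hγst, hγt, split_s, split_f, e1, e2, e3]
      abel
    rw [hdiff]
    rw [smul_sub, smul_add]
  -- combine
  have hcomb := (h1.add h2).sub h3
  have := hcomb.congr' key
  have htarget : ((l₁' + l₁'') - l₁'') • X (γ t₁, u₁') + l₁'' • X (γ t₁, u₁'')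
      - (l₁' + l₁'') • X (γ t₁, u t₁)
      = l₁' • (X (γ t₁, u₁') - X (γ t₁, u t₁)) + l₁'' • (X (γ t₁, u₁'') - X (γ t₁, u t₁)) := by
    module
  rwa [htarget] at this
end

section
/- Let m, k ∈ ℕ, let X : ℝᵐ × ℝᵏ → ℝᵐ be continuous, let a < b, let u : ℝ → ℝᵏ, and let γ : ℝ → ℝᵐ be continuous with r ↦ X(γ(r), u(r)) integrable on [a,b] and γ(t) = γ(a) + ∫_a^t X(γ(r), u(r)) dr for all t ∈ [a,b]. Let τ ∈ (a,b), l_τ ≥ 0, δτ ∈ ℝ, u_τ ∈ ℝᵏ, and assume τ is a two-sided Lebesgue time for X∘(γ,u): ∫_τ^{τ+h} X(γ(r), u(r)) dr = h·X(γ(τ), u(τ)) + o(h) as h → 0 (h of either sign). Let ε > 0 be such that for all s ∈ (0,ε], a < τ − (l_τ − δτ)s and τ + δτ·s < b, and for each s ∈ (0, ε] let γₛ : ℝ → ℝᵐ be continuous, satisfying γₛ(t) = γ(a) + ∫_a^t X(γₛ(r), uₛ(r)) dr for all t ∈ [a, τ + δτ·s], where uₛ(r) = u_τ for r ∈ (τ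 − (l_τ − δτ)s, τ + δτ·s] and uₛ(r) = u(r) otherwise. Assume moreover that γₛ(t) = γ(t) for all t ∈ [a, τ − (l_τ − δτ)s] ∩ [a,b] and that sup_{t ∈ [a, τ + δτ·s]} ‖γₛ(t) − γ(t)‖ → 0 as s → 0⁺. Then (γₛ(τ + δτ·s) − γ(τ))/s → X(γ(τ), u(τ))·δτ + (X(γ(τ), u_τ) − X(γ(τ), u(τ)))·l_τ as s → 0⁺; i.e. the curve s ↦ γₛ(τ + δτ·s) has this time-perturbation vector v[π_±] as one-sided tangent vector at s = 0. -/
/-!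
Since `γₛ = γ` up to the start `t₀ = τ - (lτ - δτ) s` of the needle and `uₛ = u_τ` on the needle
`(t₀, τ + δτ s]`, the increment `γₛ(τ + δτ s) - γ(τ)` splits as `∫_τ^{t₀} X(γ, u)` plus
`∫_{t₀}^{τ + δτ s} X(γₛ, u_τ)`. Divided by `s`, the first term tends to `(δτ - lτ) X(γ(τ), u(τ))`
because `τ` is a Lebesgue time, and the second to `lτ X(γ(τ), u_τ)`, because the needle has
length `lτ s` and on it `γₛ` is uniformly close to `γ(τ)`.
-/

open MeasureTheory Set Filter Topology

theorem le_biSup_of_continuousOn {α β : Type*} [TopologicalSpace α]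
    [ConditionallyCompleteLinearOrder β] [TopologicalSpace β] [OrderTopology β]
    {g : α → β} {S : Set α} (hS : IsCompact S) (hg : ContinuousOn g S) {x : α} (hx : x ∈ S) :
    g x ≤ ⨆ t ∈ S, g t :=
  le_ciSup₂ (f := fun t (_ : t ∈ S) => g t) ((hS.bddAbove_image hg).mono <|
    iUnion_subset fun _ => range_subset_iff.2 fun ht => mem_image_of_mem g ht) x hx

theorem eventually_forall_dist_lt_of_tendsto_iSup_norm_sub {ι E : Type*}
    [SeminormedAddCommGroup E] {l : Filter ι} {G : ι → ℝ → E} {g : ℝ → E} {S : ι → Set ℝ}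
    (hS : ∀ i, IsCompact (S i)) (hcont : ∀ᶠ i in l, ContinuousOn (fun t => ‖G i t - g t‖) (S i))
    (hsup : Tendsto (fun i => ⨆ t ∈ S i, ‖G i t - g t‖) l (𝓝 0)) :
    ∀ δ > 0, ∀ᶠ i in l, ∀ t ∈ S i, dist (G i t) (g t) < δ := by
  intro δ hδ
  filter_upwards [hcont, hsup.eventually (gt_mem_nhds hδ)] with i hi hlt t ht
  rw [dist_eq_norm]
  exact (le_biSup_of_continuousOn (hS i) hi ht).trans_lt hlt

theorem eventually_mapsTo_Icc_of_tendsto {ι E : Type*} [PseudoMetricSpace E] {l : Filter ι}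
    {G : ι → ℝ → E} {g : ℝ → E} {τ : ℝ} (hg : ContinuousAt g τ) {t₀ t₁ : ι → ℝ}
    (h₀ : Tendsto t₀ l (𝓝 τ)) (h₁ : Tendsto t₁ l (𝓝 τ))
    (hG : ∀ δ > 0, ∀ᶠ i in l, ∀ r ∈ Icc (t₀ i) (t₁ i), dist (G i r) (g r) < δ) :
    ∀ U ∈ 𝓝 (g τ), ∀ᶠ i in l, MapsTo (G i) (Icc (t₀ i) (t₁ i)) U := by
  intro U hU
  obtain ⟨δ, hδ, hball⟩ := Metric.mem_nhds_iff.1 hU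
  obtain ⟨ρ, hρ, hgρ⟩ := Metric.continuousAt_iff.1 hg (δ / 2) (half_pos hδ)
  filter_upwards [h₀.eventually (Metric.ball_mem_nhds τ hρ),
    h₁.eventually (Metric.ball_mem_nhds τ hρ), hG (δ / 2) (half_pos hδ)] with i hi₀ hi₁ hGi r hr
  have hrτ : dist r τ < ρ := by
    rw [Real.dist_eq, abs_lt] at hi₀ hi₁ ⊢
    constructor <;> linarith [hr.1, hr.2]
  refine hball ?_
  calc dist (G i r) (g τ) ≤ dist (G i r) (g r) + dist (g r) (g τ) := dist_triangle _ _ _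
    _ < δ / 2 + δ / 2 := add_lt_add (hGi r hr) (hgρ hrτ)
    _ = δ := add_halves δ

section Integral

variable {E : Type*} [NormedAddCommGroup E] [NormedSpace ℝ E]

theorem sub_eq_integral_of_forall_eq_add_integral {f γ : ℝ → E} {x₀ : E} {a c s t : ℝ}
    (hγ : ∀ t ∈ Icc a c, γ t = x₀ + ∫ r in a..t, f r) (hf : IntervalIntegrable f volume a c)
    (hs : s ∈ Icc a c) (ht : t ∈ Icc a c) :
    γ t - γ s = ∫ r in s..t, f r := by
  have hsub : ∀ {x}, x ∈ Icc a c → uIcc a x ⊆ uIcc a c := fun hx =>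
    uIcc_subset_uIcc_left (mem_uIcc_of_le hx.1 hx.2)
  rw [hγ t ht, hγ s hs, add_sub_add_left_eq_sub]
  exact intervalIntegral.integral_interval_sub_left (hf.mono_set (hsub ht)) (hf.mono_set (hsub hs))

theorem sub_eq_integral_add_integral_of_concat {f f' g γ γ' : ℝ → E} {x₀ x₀' : E}
    {a b τ t₀ t₁ : ℝ}
    (hγ : ∀ t ∈ Icc a b, γ t = x₀ + ∫ r in a..t, f r) (hf : IntervalIntegrable f volume a b)
    (hγ' : ∀ t ∈ Icc a t₁, γ' t = x₀' + ∫ r in a..t, f' r)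
    (hf'f : EqOn f' f (Icc a t₀)) (hf'g : EqOn f' g (Ioc t₀ t₁))
    (hg : IntervalIntegrable g volume t₀ t₁) (hγ't₀ : γ' t₀ = γ t₀)
    (hτ : τ ∈ Icc a b) (hat₀ : a ≤ t₀) (ht₀ : t₀ ≤ t₁) (ht₀b : t₀ ≤ b) :
    γ' t₁ - γ τ = (∫ r in τ..t₀, f r) + ∫ r in t₀..t₁, g r := by
  have hf' : IntervalIntegrable f' volume a t₁ := by
    have h₀ : IntervalIntegrable f' volume a t₀ :=
      (hf.mono_set (uIcc_subset_uIcc_left (mem_uIcc_of_le hat₀ ht₀b))).congr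
        (hf'f.symm.mono (by rw [uIoc_of_le hat₀]; exact Ioc_subset_Icc_self))
    have h₁ : IntervalIntegrable f' volume t₀ t₁ :=
      hg.congr (hf'g.symm.mono (by rw [uIoc_of_le ht₀]))
    exact h₀.trans h₁
  have hfg : ∫ r in t₀..t₁, f' r = ∫ r in t₀..t₁, g r :=
    intervalIntegral.integral_congr_ae <|
      ae_of_all _ fun r hr => hf'g (by rwa [uIoc_of_le ht₀] at hr)
  calc γ' t₁ - γ τ = (γ t₀ - γ τ) + (γ' t₁ - γ' t₀) := by rw [hγ't₀]; abel
    _ = _ := by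
      rw [sub_eq_integral_of_forall_eq_add_integral hγ hf hτ ⟨hat₀, ht₀b⟩,
        sub_eq_integral_of_forall_eq_add_integral hγ' hf' ⟨hat₀, ht₀⟩ ⟨hat₀.trans ht₀, le_rfl⟩, hfg]

theorem tendsto_smul_integral_mul_of_tendsto {f : ℝ → E} {τ : ℝ} {L : E}
    (h : Tendsto (fun h : ℝ => (1 / h) • ∫ r in τ..(τ + h), f r) (𝓝[≠] 0) (𝓝 L)) (c : ℝ) :
    Tendsto (fun s : ℝ => (1 / s) • ∫ r in τ..(τ + c * s), f r) (𝓝[≠] 0) (𝓝 (c • L)) := by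
  rcases eq_or_ne c 0 with rfl | hc
  · simp
  have hmul : Tendsto (fun s : ℝ => c * s) (𝓝[≠] 0) (𝓝[≠] 0) :=
    tendsto_nhdsWithin_of_tendsto_nhds_of_eventually_within _
      ((continuous_const_mul c).tendsto' 0 0 (mul_zero c) |>.mono_left nhdsWithin_le_nhds)
      (eventually_nhdsWithin_of_forall fun s hs => mul_ne_zero hc hs)
  refine ((h.comp hmul).const_smul c).congr' ?_
  filter_upwards [self_mem_nhdsWithin] with s hs
  rw [Function.comp_apply, smul_smul]
  congr 1
  field_simp

theorem tendsto_smul_integral_of_eventually_mapsTo [CompleteSpace E] {F : ℝ → ℝ → E} {v : E}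
    {l : ℝ} (hl : 0 ≤ l) {t₀ t₁ : ℝ → ℝ} (hlen : ∀ s, t₁ s - t₀ s = l * s)
    (hint : ∀ᶠ s in 𝓝[>] 0, IntervalIntegrable (F s) volume (t₀ s) (t₁ s))
    (hF : ∀ U ∈ 𝓝 v, ∀ᶠ s in 𝓝[>] 0, MapsTo (F s) (Icc (t₀ s) (t₁ s)) U) :
    Tendsto (fun s => (1 / s) • ∫ r in t₀ s..t₁ s, F s r) (𝓝[>] 0) (𝓝 (l • v)) := by
  rw [Metric.tendsto_nhds]
  intro η hη
  have hη' : 0 < η / (l + 1) := by positivity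
  filter_upwards [self_mem_nhdsWithin, hint, hF _ (Metric.closedBall_mem_nhds v hη')]
    with s (hs : 0 < s) hFs hmaps
  have hle : t₀ s ≤ t₁ s := sub_nonneg.1 (hlen s ▸ mul_nonneg hl hs.le)
  have hdiff : (1 / s) • (∫ r in t₀ s..t₁ s, F s r) - l • v
      = (1 / s) • ∫ r in t₀ s..t₁ s, (F s r - v) := by
    rw [intervalIntegral.integral_sub hFs intervalIntegrable_const,
      intervalIntegral.integral_const, hlen, smul_sub, smul_smul]
    congr 2
    field_simp
  have hbound : ‖∫ r in t₀ s..t₁ s, (F s r - v)‖ ≤ η / (l + 1) * (l * s) := by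
    rw [← hlen, ← abs_of_nonneg (sub_nonneg.2 hle)]
    refine intervalIntegral.norm_integral_le_of_norm_le_const fun r hr => ?_
    rw [uIoc_of_le hle] at hr
    simpa [dist_eq_norm] using hmaps (Ioc_subset_Icc_self hr)
  calc dist ((1 / s) • ∫ r in t₀ s..t₁ s, F s r) (l • v)
      = (1 / s) * ‖∫ r in t₀ s..t₁ s, (F s r - v)‖ := by
        rw [dist_eq_norm, hdiff, norm_smul, Real.norm_of_nonneg (by positivity)]
    _ ≤ (1 / s) * (η / (l + 1) * (l * s)) := by gcongr
    _ = η / (l + 1) * l := by field_simp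
    _ < η := by rw [div_mul_eq_mul_div, div_lt_iff₀ (by positivity)]; linarith

theorem tendsto_smul_integral_comp_of_forall_dist_lt [CompleteSpace E] {F : Type*}
    [PseudoMetricSpace F] {φ : F → E} (hφ : Continuous φ) {G : ℝ → ℝ → F} {g : ℝ → F}
    {τ l c : ℝ} (hl : 0 ≤ l) (hg : ContinuousAt g τ) (hG : ∀ᶠ s in 𝓝[>] 0, Continuous (G s))
    (hclose : ∀ δ > 0, ∀ᶠ s in 𝓝[>] 0,
      ∀ r ∈ Icc (τ - (l - c) * s) (τ + c * s), dist (G s r) (g r) < δ) :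
    Tendsto (fun s => (1 / s) • ∫ r in (τ - (l - c) * s)..(τ + c * s), φ (G s r)) (𝓝[>] 0)
      (𝓝 (l • φ (g τ))) := by
  have hendpoint : ∀ c' : ℝ, Tendsto (fun s => τ + c' * s) (𝓝[>] 0) (𝓝 τ) := fun c' =>
    ((continuous_const.add (continuous_const.mul continuous_id)).tendsto' 0 τ (by simp)).mono_left
      nhdsWithin_le_nhds
  refine tendsto_smul_integral_of_eventually_mapsTo hl (fun s => by ring)
    (hG.mono fun s hs => (hφ.comp hs).intervalIntegrable _ _) fun U hU => ?_
  filter_upwards [eventually_mapsTo_Icc_of_tendsto hg ((hendpoint (c - l)).congr fun s => by ring)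
    (hendpoint c) hclose _ (hφ.continuousAt.preimage_mem_nhds hU)] with s hs r hr
  exact hs hr

end Integral

theorem time_perturbation_vector_general
    (m k : ℕ)
    (X : EuclideanSpace ℝ (Fin m) × EuclideanSpace ℝ (Fin k) → EuclideanSpace ℝ (Fin m))
    (hX : Continuous X)
    (a b : ℝ)
    (u : ℝ → EuclideanSpace ℝ (Fin k))
    (γ : ℝ → EuclideanSpace ℝ (Fin m)) (hγc : Continuous γ)
    (hint : IntervalIntegrable (fun r => X (γ r, u r)) volume a b)
    (hγ : ∀ t ∈ Icc a b, γ t = γ a + ∫ r in a..t, X (γ r, u r))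
    (τ : ℝ) (hτ : τ ∈ Ioo a b) (lτ : ℝ) (hlτ : 0 ≤ lτ) (δτ : ℝ)
    (uτ : EuclideanSpace ℝ (Fin k))
    (hLeb : Tendsto (fun h : ℝ => (1 / h) • ∫ r in τ..(τ + h), X (γ r, u r))
      (nhdsWithin 0 {0}ᶜ) (nhds (X (γ τ, u τ))))
    (ε : ℝ) (hε : 0 < ε)
    (hεab : ∀ s ∈ Ioc (0 : ℝ) ε, a < τ - (lτ - δτ) * s ∧ τ + δτ * s < b)
    (us : ℝ → ℝ → EuclideanSpace ℝ (Fin k))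
    (hus : ∀ s r : ℝ, us s r =
      if τ - (lτ - δτ) * s < r ∧ r ≤ τ + δτ * s then uτ else u r)
    (γs : ℝ → ℝ → EuclideanSpace ℝ (Fin m))
    (hγsc : ∀ s ∈ Ioc (0 : ℝ) ε, Continuous (γs s))
    (hγs : ∀ s ∈ Ioc (0 : ℝ) ε, ∀ t ∈ Icc a (τ + δτ * s),
      γs s t = γ a + ∫ r in a..t, X (γs s r, us s r))
    (hagree : ∀ s ∈ Ioc (0 : ℝ) ε, ∀ t ∈ Icc a (τ - (lτ - δτ) * s) ∩ Icc a b,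
      γs s t = γ t)
    (hunif : Tendsto (fun s : ℝ => ⨆ t ∈ Icc a (τ + δτ * s), ‖γs s t - γ t‖)
      (nhdsWithin 0 (Ioi 0)) (nhds 0)) :
    Tendsto (fun s : ℝ => (1 / s) • (γs s (τ + δτ * s) - γ τ)) (nhdsWithin 0 (Ioi 0))
      (nhds (δτ • X (γ τ, u τ) + lτ • (X (γ τ, uτ) - X (γ τ, u τ)))) := by
  have hdecomp : ∀ s ∈ Ioc (0 : ℝ) ε, γs s (τ + δτ * s) - γ τ =
      (∫ r in τ..(τ + (δτ - lτ) * s), X (γ r, u r))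
        + ∫ r in (τ - (lτ - δτ) * s)..(τ + δτ * s), X (γs s r, uτ) := by
    intro s hs
    obtain ⟨ha₀, h₁b⟩ := hεab s hs
    have ht₀b : τ - (lτ - δτ) * s ≤ b := by nlinarith [mul_nonneg hlτ hs.1.le]
    have h₀₁ : τ - (lτ - δτ) * s ≤ τ + δτ * s := by nlinarith [mul_nonneg hlτ hs.1.le]
    rw [show τ + (δτ - lτ) * s = τ - (lτ - δτ) * s by ring]
    refine sub_eq_integral_add_integral_of_concat hγ hint (hγs s hs) (fun r hr => ?_)
      (fun r hr => ?_) ((hX.comp ((hγsc s hs).prodMk continuous_const)).intervalIntegrable _ _)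
      (hagree s hs _ ⟨⟨ha₀.le, le_rfl⟩, ha₀.le, ht₀b⟩) ⟨hτ.1.le, hτ.2.le⟩ ha₀.le h₀₁
      (ht₀b)
    · rw [hus, if_neg fun h => hr.2.not_gt h.1,
        hagree s hs r ⟨hr, hr.1, hr.2.trans (ht₀b)⟩]
    · rw [hus, if_pos ⟨hr.1, hr.2⟩]
  have hsmall : ∀ᶠ s in 𝓝[>] 0, s ∈ Ioc 0 ε := Ioc_mem_nhdsGT hε
  have hA := (tendsto_smul_integral_mul_of_tendsto hLeb (δτ - lτ)).mono_left (nhdsGT_le_nhdsNE 0)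
  have hclose : ∀ δ > 0, ∀ᶠ s in 𝓝[>] 0,
      ∀ r ∈ Icc (τ - (lτ - δτ) * s) (τ + δτ * s), dist (γs s r) (γ r) < δ := by
    have hcont : ∀ᶠ s in 𝓝[>] 0, ContinuousOn (fun t => ‖γs s t - γ t‖) (Icc a (τ + δτ * s)) :=
      hsmall.mono fun s hs => ((hγsc s hs).sub hγc).norm.continuousOn
    intro δ hδ
    filter_upwards [eventually_forall_dist_lt_of_tendsto_iSup_norm_sub
      (fun _ => isCompact_Icc) hcont hunif δ hδ, hsmall] with s hs hsε r hr
    exact hs r ⟨(hεab s hsε).1.le.trans hr.1, hr.2⟩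
  have hB := tendsto_smul_integral_comp_of_forall_dist_lt (φ := fun x => X (x, uτ))
    (hX.comp (continuous_id.prodMk continuous_const)) hlτ hγc.continuousAt (hsmall.mono hγsc)
    hclose
  have hlim : δτ • X (γ τ, u τ) + lτ • (X (γ τ, uτ) - X (γ τ, u τ))
      = (δτ - lτ) • X (γ τ, u τ) + lτ • X (γ τ, uτ) := by module
  rw [hlim]
  refine (hA.add hB).congr' ?_
  filter_upwards [hsmall] with s hs
  rw [hdecomp s hs, smul_add]

theorem time_perturbation_vector
    (m k : ℕ)
    (X : EuclideanSpace ℝ (Fin m) × EuclideanSpace ℝ (Fin k) → EuclideanSpace ℝ (Fin m))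
    (hX : Continuous X)
    (a b : ℝ) (hab : a < b)
    (u : ℝ → EuclideanSpace ℝ (Fin k))
    (γ : ℝ → EuclideanSpace ℝ (Fin m)) (hγc : Continuous γ)
    (hint : IntervalIntegrable (fun r => X (γ r, u r)) volume a b)
    (hγ : ∀ t ∈ Icc a b, γ t = γ a + ∫ r in a..t, X (γ r, u r))
    (τ : ℝ) (hτ : τ ∈ Ioo a b) (lτ : ℝ) (hlτ : 0 ≤ lτ) (δτ : ℝ)
    (uτ : EuclideanSpace ℝ (Fin k))
    (hLeb : Tendsto (fun h : ℝ => (1 / h) • ∫ r in τ..(τ + h), X (γ r, u r))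
      (nhdsWithin 0 {0}ᶜ) (nhds (X (γ τ, u τ))))
    (ε : ℝ) (hε : 0 < ε)
    (hεab : ∀ s ∈ Ioc (0 : ℝ) ε, a < τ - (lτ - δτ) * s ∧ τ + δτ * s < b)
    (us : ℝ → ℝ → EuclideanSpace ℝ (Fin k))
    (hus : ∀ s r : ℝ, us s r =
      if τ - (lτ - δτ) * s < r ∧ r ≤ τ + δτ * s then uτ else u r)
    (γs : ℝ → ℝ → EuclideanSpace ℝ (Fin m))
    (hγsc : ∀ s ∈ Ioc (0 : ℝ) ε, Continuous (γs s))
    (hγs : ∀ s ∈ Ioc (0 : ℝ) ε, ∀ t ∈ Icc a (τ + δτ * s),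
      γs s t = γ a + ∫ r in a..t, X (γs s r, us s r))
    (hagree : ∀ s ∈ Ioc (0 : ℝ) ε, ∀ t ∈ Icc a (τ - (lτ - δτ) * s) ∩ Icc a b,
      γs s t = γ t)
    (hunif : Tendsto (fun s : ℝ => ⨆ t ∈ Icc a (τ + δτ * s), ‖γs s t - γ t‖)
      (nhdsWithin 0 (Ioi 0)) (nhds 0)) :
    Tendsto (fun s : ℝ => (1 / s) • (γs s (τ + δτ * s) - γ τ)) (nhdsWithin 0 (Ioi 0))
      (nhds (δτ • X (γ τ, u τ) + lτ • (X (γ τ, uτ) - X (γ τ, u τ)))) :=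
  time_perturbation_vector_general m k X hX a b u γ hγc hint hγ τ hτ lτ hlτ δτ uτ hLeb ε hε hεab us
    hus γs hγsc hγs hagree hunif
end
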